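/- arXiv:1509.03228 — 2 statements merged into one kernel-verified Lean document; each statement's English description precedes it below -/
import Mathlib

section
/- With rational coefficients, the pullback homomorphism Λ* : PP[Σ;ℚ] → PP[K̂;ℚ] is an isomorphism of ℚ-algebras; its inverse sends a family (g_τ)_{τ∈K} to the family (f_σ)_{σ maximal} where f_σ is obtained from g_σ by the linear change of variables inverse to the substitution φ_σ (i.e., f_σ(u) = g_σ(Λ_σ^{−1}u), where Λ_σ is the invertible matrix over ℚ with columns λ_i, i ∈ σ). -/
noncomputable section

open MvPolynomial

/-- Restriction of a polynomial to a face `σ`: substitute `x i = 0` for every `i ∉ σ`. -/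
def restrictFace (k : Type*) [CommRing k] {m : ℕ} (σ : Finset (Fin m)) :
    MvPolynomial (Fin m) k →ₐ[k] MvPolynomial (Fin m) k :=
  aeval (fun i => if i ∈ σ then X i else 0)

/-- `K` is a simplicial complex on the vertex set `{1, …, m}`. -/
def IsSimplicialComplex {m : ℕ} (K : Set (Finset (Fin m))) : Prop :=
  ∅ ∈ K ∧ ∀ σ ∈ K, ∀ τ, τ ⊆ σ → τ ∈ K

/-- `K` is pure of rank `n`. -/
def IsPureOfRank {m : ℕ} (K : Set (Finset (Fin m))) (n : ℕ) : Prop :=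
  ∀ σ ∈ K, ∃ τ ∈ K, σ ⊆ τ ∧ τ.card = n

/-- The maximal faces (the faces of cardinality `n`) of `K`. -/
abbrev MaxFace {m : ℕ} (K : Set (Finset (Fin m))) (n : ℕ) : Type _ :=
  {s : Finset (Fin m) // s ∈ K ∧ s.card = n}

/-- The algebra `PP[K̂;k]` of piecewise polynomials on the pulled-back fan `K̂`. -/
def PPhat (k : Type*) [CommRing k] {m : ℕ} (K : Set (Finset (Fin m))) :
    Subalgebra k ((σ : K) → MvPolynomial (Fin m) k) :=
  (⨅ σ : K, (MvPolynomial.supported k (((σ : Finset (Fin m)) : Set (Fin m)))).comap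
      (Pi.evalAlgHom k (fun _ : K => MvPolynomial (Fin m) k) σ)) ⊓
  ⨅ (σ : K) (τ : K) (_ : (τ : Finset (Fin m)) ⊆ (σ : Finset (Fin m))),
    AlgHom.equalizer (Pi.evalAlgHom k (fun _ : K => MvPolynomial (Fin m) k) τ)
      ((restrictFace k (τ : Finset (Fin m))).comp
        (Pi.evalAlgHom k (fun _ : K => MvPolynomial (Fin m) k) σ))

/-- The substitution `φ_τ : k[u_1,…,u_n] → k[x_1,…,x_m]`,
`u_j ↦ ∑_{i ∈ τ} (λ_i)_j x_i`, attached to a face `τ` and ray data `L i = λ_i ∈ ℤⁿ`. -/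
def phiFace (k : Type*) [CommRing k] {m n : ℕ} (L : Fin m → Fin n → ℤ) (τ : Finset (Fin m)) :
    MvPolynomial (Fin n) k →ₐ[k] MvPolynomial (Fin m) k :=
  aeval (fun j : Fin n => ∑ i ∈ τ, (C ((L i j : ℤ) : k)) * X i)

/-- The algebra `PP[Σ;k]` of piecewise polynomials on the simplicial fan `Σ` determined
by `(K, L)`: families `(f_σ)_{σ maximal}` with
`φ_{σ∩σ'}(f_σ) = φ_{σ∩σ'}(f_{σ'})` for all maximal `σ, σ'`; operations componentwise. -/
def PPSigma (k : Type*) [CommRing k] {m n : ℕ} (K : Set (Finset (Fin m)))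
    (L : Fin m → Fin n → ℤ) :
    Subalgebra k ((σ : MaxFace K n) → MvPolynomial (Fin n) k) :=
  ⨅ (σ : MaxFace K n) (σ' : MaxFace K n),
    AlgHom.equalizer
      ((phiFace k L ((σ : Finset (Fin m)) ∩ (σ' : Finset (Fin m)))).comp
        (Pi.evalAlgHom k (fun _ : MaxFace K n => MvPolynomial (Fin n) k) σ))
      ((phiFace k L ((σ : Finset (Fin m)) ∩ (σ' : Finset (Fin m)))).comp
        (Pi.evalAlgHom k (fun _ : MaxFace K n => MvPolynomial (Fin n) k) σ'))

/-- The pullback homomorphism `Λ* : PP[Σ;k] → PP[K̂;k]`, whose component at a face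
`τ ∈ K` is `φ_τ(f_σ)` for a (chosen) maximal face `σ ⊇ τ`. -/
def lambdaStar (k : Type*) [CommRing k] {m n : ℕ} (K : Set (Finset (Fin m)))
    (L : Fin m → Fin n → ℤ) (cmax : K → MaxFace K n) :
    ((σ : MaxFace K n) → MvPolynomial (Fin n) k) →ₐ[k] ((τ : K) → MvPolynomial (Fin m) k) :=
  Pi.algHom _ _ (fun τ : K =>
    (phiFace k L (τ : Finset (Fin m))).comp
      (Pi.evalAlgHom k (fun _ : MaxFace K n => MvPolynomial (Fin n) k) (cmax τ)))

/-!
Over `ℚ` the rays of a maximal face `σ` form a basis, so the matrix `Λ_σ` is invertible. Writing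
`φ_σ` as the linear substitution by `Λ_σ` followed by the renaming of the variables of `σ` into
`{1, …, m}` shows that `φ_σ` is injective with image exactly the polynomials supported on `σ`.
Since `restrictFace τ ∘ φ_σ = φ_τ` for `τ ⊆ σ`, the component of `Λ* f` at a maximal face `σ` is
`φ_σ f_σ`, so `Λ*` is injective on `PP[Σ]`. Conversely, pulling each `g_σ` back along `φ_σ` gives
a family whose images under `φ_{σ ∩ σ'}` all equal `g_{σ ∩ σ'}`; it lies in `PP[Σ]` and maps to `g`.
-/

section LinearSubst

variable {k : Type*} [CommRing k] {ι κ μ : Type*} [Fintype ι] [Fintype κ]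

def linearSubst (M : Matrix ι κ k) : MvPolynomial κ k →ₐ[k] MvPolynomial ι k :=
  aeval fun j => ∑ i, C (M i j) * X i

lemma linearSubst_comp (M : Matrix ι κ k) (N : Matrix κ μ k) :
    (linearSubst M).comp (linearSubst N) = linearSubst (M * N) := by
  refine algHom_ext fun j => ?_
  simp only [linearSubst, AlgHom.comp_apply, aeval_X, map_sum, map_mul, aeval_C,
    algebraMap_eq, Matrix.mul_apply, Finset.mul_sum, Finset.sum_mul]
  rw [Finset.sum_comm]
  exact Finset.sum_congr rfl fun i _ => Finset.sum_congr rfl fun l _ => by ring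

lemma linearSubst_one [DecidableEq ι] :
    linearSubst (1 : Matrix ι ι k) = AlgHom.id k (MvPolynomial ι k) := by
  refine algHom_ext fun j => ?_
  simp [linearSubst, Matrix.one_apply, ite_mul]

end LinearSubst

lemma Matrix.exists_mul_eq_one_of_linearIndependent_row {K ι κ : Type*} [Field K]
    [Fintype ι] [Fintype κ] [DecidableEq ι] [DecidableEq κ] {A : Matrix ι κ K}
    (hcard : Fintype.card ι = Fintype.card κ) (hA : LinearIndependent K A.row) :
    ∃ B : Matrix κ ι K, A * B = 1 ∧ B * A = 1 := by
  obtain ⟨e⟩ := Fintype.card_eq.mp hcard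
  set A' : Matrix κ κ K := A.submatrix e.symm id
  have hA' : IsUnit A'.det := (Matrix.isUnit_iff_isUnit_det _).mp <|
    Matrix.linearIndependent_rows_iff_isUnit.mp (hA.comp e.symm e.symm.injective)
  have hAB : A * (A'⁻¹).submatrix id e = 1 := by
    have hAA' : A = A'.submatrix e id := by ext; simp [A']
    rw [hAA', ← Equiv.coe_refl, Matrix.submatrix_mul_equiv, Matrix.mul_nonsing_inv _ hA',
      Matrix.submatrix_one_equiv]
  exact ⟨_, hAB, (Matrix.mul_eq_one_comm_of_equiv e).mp hAB⟩

def faceMatrix (k : Type*) [CommRing k] {m n : ℕ} (L : Fin m → Fin n → ℤ)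
    (σ : Finset (Fin m)) : Matrix σ (Fin n) k :=
  Matrix.of fun i j => (L i j : k)

section Face

variable {k : Type*} [CommRing k] {m n : ℕ} (L : Fin m → Fin n → ℤ)

lemma phiFace_eq_rename_comp_linearSubst (σ : Finset (Fin m)) :
    phiFace k L σ =
      (rename (↑) : MvPolynomial σ k →ₐ[k] _).comp (linearSubst (faceMatrix k L σ)) := by
  refine algHom_ext fun j => ?_
  simp only [phiFace, linearSubst, faceMatrix, AlgHom.comp_apply, aeval_X, map_sum, map_mul,
    rename_C, rename_X, Matrix.of_apply]
  exact (Finset.sum_coe_sort σ fun i => C ((L i j : ℤ) : k) * X i).symm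

lemma phiFace_mem_supported (σ : Finset (Fin m)) (p : MvPolynomial (Fin n) k) :
    phiFace k L σ p ∈ supported k (σ : Set (Fin m)) := by
  rw [supported_eq_range_rename, phiFace_eq_rename_comp_linearSubst]
  exact ⟨_, rfl⟩

lemma phiFace_injective {σ : Finset (Fin m)} {B : Matrix (Fin n) σ k}
    (hBA : B * faceMatrix k L σ = 1) : Function.Injective (phiFace k L σ) := by
  have hleft : Function.LeftInverse (linearSubst B) (linearSubst (faceMatrix k L σ)) :=
    fun p => by rw [← AlgHom.comp_apply, linearSubst_comp, hBA, linearSubst_one, AlgHom.id_apply]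
  rw [phiFace_eq_rename_comp_linearSubst]
  exact (rename_injective _ Subtype.val_injective).comp hleft.injective

lemma supported_le_range_phiFace {σ : Finset (Fin m)} {B : Matrix (Fin n) σ k}
    (hAB : faceMatrix k L σ * B = 1) :
    supported k (σ : Set (Fin m)) ≤ (phiFace k L σ).range := by
  intro _ hg
  rw [supported_eq_range_rename] at hg
  obtain ⟨g, rfl⟩ := (AlgHom.mem_range _).mp hg
  refine (AlgHom.mem_range _).mpr ⟨linearSubst B g, ?_⟩
  rw [phiFace_eq_rename_comp_linearSubst, AlgHom.comp_apply,
    ← AlgHom.comp_apply (linearSubst _), linearSubst_comp, hAB, linearSubst_one, AlgHom.id_apply]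
  rfl

lemma restrictFace_comp_phiFace {τ σ : Finset (Fin m)} (h : τ ⊆ σ) :
    (restrictFace k τ).comp (phiFace k L σ) = phiFace k L τ := by
  refine algHom_ext fun j => ?_
  simp only [AlgHom.comp_apply, phiFace, aeval_X, map_sum, map_mul, aeval_C,
    restrictFace, algebraMap_eq, mul_ite, mul_zero]
  rw [Finset.sum_ite_mem, Finset.inter_eq_right.mpr h]

lemma restrictFace_phiFace {τ σ : Finset (Fin m)} (h : τ ⊆ σ) (p : MvPolynomial (Fin n) k) :
    restrictFace k τ (phiFace k L σ p) = phiFace k L τ p :=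
  DFunLike.congr_fun (restrictFace_comp_phiFace L h) p

end Face

section Pullback

variable {k : Type*} [CommRing k] {m n : ℕ} {K : Set (Finset (Fin m))}
  {L : Fin m → Fin n → ℤ} {cmax : K → MaxFace K n}

lemma mem_PPhat_iff {g : (τ : K) → MvPolynomial (Fin m) k} :
    g ∈ PPhat k K ↔
      (∀ τ : K, g τ ∈ supported k ((τ : Finset (Fin m)) : Set (Fin m))) ∧
        ∀ σ τ : K, (τ : Finset (Fin m)) ⊆ σ → g τ = restrictFace k τ (g σ) := by
  simp [PPhat, Algebra.mem_inf, Algebra.mem_iInf, Subalgebra.mem_comap, AlgHom.mem_equalizer]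

lemma mem_PPSigma_iff {f : (σ : MaxFace K n) → MvPolynomial (Fin n) k} :
    f ∈ PPSigma k K L ↔
      ∀ σ σ' : MaxFace K n, phiFace k L ((σ : Finset (Fin m)) ∩ σ') (f σ) =
        phiFace k L ((σ : Finset (Fin m)) ∩ σ') (f σ') := by
  simp [PPSigma, Algebra.mem_iInf, AlgHom.mem_equalizer]

lemma lambdaStar_apply (f : (σ : MaxFace K n) → MvPolynomial (Fin n) k) (τ : K) :
    lambdaStar k K L cmax f τ = phiFace k L τ (f (cmax τ)) :=
  rfl

lemma phiFace_eq_of_mem_PPSigma {f : (σ : MaxFace K n) → MvPolynomial (Fin n) k}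
    (hf : f ∈ PPSigma k K L) {τ : Finset (Fin m)} {σ σ' : MaxFace K n}
    (hσ : τ ⊆ σ) (hσ' : τ ⊆ σ') : phiFace k L τ (f σ) = phiFace k L τ (f σ') := by
  have hτ : τ ⊆ (σ : Finset (Fin m)) ∩ σ' := Finset.subset_inter hσ hσ'
  rw [← restrictFace_phiFace L hτ, mem_PPSigma_iff.mp hf σ σ', restrictFace_phiFace L hτ]

lemma phiFace_eq_of_mem_PPhat {g : (τ : K) → MvPolynomial (Fin m) k} (hg : g ∈ PPhat k K)
    {σ τ : K} (hτσ : (τ : Finset (Fin m)) ⊆ σ) {p : MvPolynomial (Fin n) k}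
    (hp : phiFace k L σ p = g σ) : phiFace k L τ p = g τ := by
  rw [← restrictFace_phiFace L hτσ, hp, ← (mem_PPhat_iff.mp hg).2 σ τ hτσ]

lemma lambdaStar_apply_of_subset (hcmax : ∀ τ : K, (τ : Finset (Fin m)) ⊆ cmax τ)
    {f : (σ : MaxFace K n) → MvPolynomial (Fin n) k}
    (hf : f ∈ PPSigma k K L) {τ : K} {σ : MaxFace K n} (hτσ : (τ : Finset (Fin m)) ⊆ σ) :
    lambdaStar k K L cmax f τ = phiFace k L τ (f σ) :=
  phiFace_eq_of_mem_PPSigma hf (hcmax τ) hτσ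

lemma lambdaStar_mapsTo (hcmax : ∀ τ : K, (τ : Finset (Fin m)) ⊆ cmax τ) :
    Set.MapsTo (lambdaStar k K L cmax) (PPSigma k K L) (PPhat k K) := by
  intro f hf
  refine mem_PPhat_iff.mpr ⟨fun τ => phiFace_mem_supported L _ _, fun σ τ hτσ => ?_⟩
  rw [lambdaStar_apply f σ, restrictFace_phiFace L hτσ]
  exact lambdaStar_apply_of_subset hcmax hf (hτσ.trans (hcmax σ))

lemma lambdaStar_injOn (hcmax : ∀ τ : K, (τ : Finset (Fin m)) ⊆ cmax τ)
    (hinj : ∀ σ : MaxFace K n, Function.Injective (phiFace k L σ)) :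
    Set.InjOn (lambdaStar k K L cmax) (PPSigma k K L) := by
  intro f hf f' hf' hff'
  funext σ
  apply hinj σ
  rw [← lambdaStar_apply_of_subset hcmax hf (τ := ⟨σ, σ.2.1⟩) subset_rfl, hff',
    lambdaStar_apply_of_subset hcmax hf' subset_rfl]

lemma lambdaStar_surjOn (hcmax : ∀ τ : K, (τ : Finset (Fin m)) ⊆ cmax τ)
    (hK : ∀ σ ∈ K, ∀ τ, τ ⊆ σ → τ ∈ K)
    (hsurj : ∀ σ : MaxFace K n, supported k (σ : Set (Fin m)) ≤ (phiFace k L σ).range) :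
    Set.SurjOn (lambdaStar k K L cmax) (PPSigma k K L) (PPhat k K) := by
  intro g hg
  have hpre : ∀ σ : MaxFace K n, ∃ p, phiFace k L σ p = g ⟨σ, σ.2.1⟩ := fun σ =>
    hsurj σ ((mem_PPhat_iff.mp hg).1 ⟨σ, σ.2.1⟩)
  choose f hf using hpre
  have hface : ∀ (σ : MaxFace K n) (τ : K), (τ : Finset (Fin m)) ⊆ σ →
      phiFace k L τ (f σ) = g τ :=
    fun σ τ hτσ => phiFace_eq_of_mem_PPhat hg (σ := ⟨σ, σ.2.1⟩) hτσ (hf σ)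
  have hfmem : f ∈ PPSigma k K L := mem_PPSigma_iff.mpr fun σ σ' => by
    have hρ : (σ : Finset (Fin m)) ∩ σ' ∈ K := hK σ σ.2.1 _ Finset.inter_subset_left
    rw [hface σ ⟨_, hρ⟩ Finset.inter_subset_left,
      hface σ' ⟨_, hρ⟩ Finset.inter_subset_right]
  refine ⟨f, hfmem, funext fun τ => ?_⟩
  rw [lambdaStar_apply]
  exact hface (cmax τ) τ (hcmax τ)

end Pullback

theorem lambdaStar_bijective_rat_general {m n : ℕ} (K : Set (Finset (Fin m)))
    (L : Fin m → Fin n → ℤ)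
    (hK : IsSimplicialComplex K)
    (hind : ∀ σ ∈ K, LinearIndependent ℚ
      (fun i : {x : Fin m // x ∈ σ} => fun j : Fin n => ((L i j : ℤ) : ℚ)))
    (cmax : K → MaxFace K n)
    (hcmax : ∀ τ : K, (τ : Finset (Fin m)) ⊆ ((cmax τ : MaxFace K n) : Finset (Fin m))) :
    Set.BijOn (lambdaStar ℚ K L cmax) (PPSigma ℚ K L) (PPhat ℚ K) ∧
    ∀ f ∈ PPSigma ℚ K L, ∀ σ : MaxFace K n,
      lambdaStar ℚ K L cmax f (⟨(σ : Finset (Fin m)), σ.2.1⟩ : K) =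
        phiFace ℚ L (σ : Finset (Fin m)) (f σ) := by
  have hinv : ∀ σ : MaxFace K n,
      ∃ B : Matrix (Fin n) σ ℚ, faceMatrix ℚ L σ * B = 1 ∧ B * faceMatrix ℚ L σ = 1 :=
    fun σ => Matrix.exists_mul_eq_one_of_linearIndependent_row
      (A := faceMatrix ℚ L σ) (by rw [Fintype.card_coe, σ.2.2, Fintype.card_fin]) (hind σ σ.2.1)
  choose B hAB hBA using hinv
  refine ⟨⟨lambdaStar_mapsTo hcmax,
      lambdaStar_injOn hcmax fun σ => phiFace_injective L (hBA σ),
      lambdaStar_surjOn hcmax hK.2 fun σ => supported_le_range_phiFace L (hAB σ)⟩,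
    fun f hf σ => lambdaStar_apply_of_subset hcmax hf subset_rfl⟩

/-- Over `ℚ`, the pullback homomorphism `Λ* : PP[Σ;ℚ] → PP[K̂;ℚ]` is an isomorphism of
`ℚ`-algebras: it maps `PP[Σ;ℚ]` bijectively onto `PP[K̂;ℚ]`, and its inverse sends a
family `(g_τ)` to the family `(f_σ)` with `f_σ(u) = g_σ(Λ_σ⁻¹ u)`, i.e. with
`φ_σ(f_σ) = g_σ` for every maximal face `σ` (second clause below). -/
theorem lambdaStar_bijective_rat {m n : ℕ} (K : Set (Finset (Fin m)))
    (L : Fin m → Fin n → ℤ)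
    (hK : IsSimplicialComplex K)
    (hind : ∀ σ ∈ K, LinearIndependent ℚ
      (fun i : {x : Fin m // x ∈ σ} => fun j : Fin n => ((L i j : ℤ) : ℚ)))
    (hpure : IsPureOfRank K n)
    (cmax : K → MaxFace K n)
    (hcmax : ∀ τ : K, (τ : Finset (Fin m)) ⊆ ((cmax τ : MaxFace K n) : Finset (Fin m))) :
    Set.BijOn (lambdaStar ℚ K L cmax) (PPSigma ℚ K L) (PPhat ℚ K) ∧
    ∀ f ∈ PPSigma ℚ K L, ∀ σ : MaxFace K n,
      lambdaStar ℚ K L cmax f (⟨(σ : Finset (Fin m)), σ.2.1⟩ : K) =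
        phiFace ℚ L (σ : Finset (Fin m)) (f σ) :=
  lambdaStar_bijective_rat_general K L hK hind cmax hcmax
end
end

section
/- Fix 2 ≤ i ≤ k. Suppose that for every point x ∈ Z_{i−1} the order of its (necessarily finite) stabilizer under the T^{i−1}-action divides c^i_{α,l} for all 0 ≤ α ≤ n_i and 1 ≤ l ≤ i−1. Then π_i : X_i → X_{i−1} is a locally trivial fiber bundle with fiber the weighted projective space ℂP^{n_i}_{χ^i}: every point of X_{i−1} has an open neighborhood U together with a homeomorphism π_i^{−1}(U) ≅ U × ℂP^{n_i}_{χ^i} commuting with the projections to U, where ℂP^{n_i}_{χ^i} denotes the orbit space of S^{2n_i+1} under the circle action u·z = (u^{χ^i_0}z_0,…,u^{χ^i_{n_i}}z_{n_i}) with the quotient topology. -/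
/-!
Fix a point `z` of `Z_{i-1}` and a coordinate `z^j_{a_j} ≠ 0` in every sphere. On the open
invariant set `V` where these coordinates stay nonzero, their phases `z^j_{a_j} / |z^j_{a_j}|`
transform under `u ∈ T^{i-1}` by the triangular characters
`u_j^{χ^j_{a_j}} ∏_{l<j} u_l^{c^j_{a_j,l}}`. The stabilizer of the coordinate point `e_a` is the
joint kernel of these characters and has order `∏_j χ^j_{a_j}`; as this order divides every
`c^i_{α,l}`, each character `u ↦ ∏_l u_l^{c^i_{α,l}}` is a product of integral powers of the
triangular ones. The same product of powers of the phases is a gauge `λ : V → (S¹)^{n_i+1}` with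
`λ(u·z) = (∏_l u_l^{c^i_{α,l}})_α · λ(z)`. Multiplying the last sphere coordinate by `λ(z)⁻¹`
turns the `T^i`-action over `V` into the product of the `T^{i-1}`-action on `V` and the weighted
circle action on `S^{2n_i+1}`, which trivializes `π_i` over `V / T^{i-1}`.
-/

noncomputable section

/-- The scalar by which `u ∈ T^i` multiplies the coordinate `z^j_α`:
`u_j^{χ^j_α} · ∏_{l<j} u_l^{c^j_{α,l}}`. -/
def torusScalar (n : ℕ → ℕ) (χ : (i : ℕ) → Fin (n i + 1) → ℕ)
    (c : (i : ℕ) → Fin (n i + 1) → ℕ → ℤ) {i : ℕ} (u : Fin i → Circle)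
    (j : Fin i) (α : Fin (n j + 1)) : Circle :=
  u j ^ χ (j : ℕ) α * ∏ l : Fin i, if (l : ℕ) < (j : ℕ) then u l ^ c (j : ℕ) α (l : ℕ) else 1

/-- The action of `T^i` on the ambient space `∏_{j<i} ℂ^{n_j+1}`. -/
def torusAct (n : ℕ → ℕ) (χ : (i : ℕ) → Fin (n i + 1) → ℕ)
    (c : (i : ℕ) → Fin (n i + 1) → ℕ → ℤ) {i : ℕ} (u : Fin i → Circle)
    (z : (j : Fin i) → Fin (n j + 1) → ℂ) : (j : Fin i) → Fin (n j + 1) → ℂ :=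
  fun j α => (torusScalar n χ c u j α : ℂ) * z j α

/-- `Z_i = ∏_{j=1}^{i} S^{2n_j+1}`, the product of the unit spheres. -/
def Zset (n : ℕ → ℕ) (i : ℕ) : Set ((j : Fin i) → Fin (n j + 1) → ℂ) :=
  {z | ∀ j : Fin i, ∑ α, Complex.normSq (z j α) = 1}

/-- The orbit equivalence relation of the `T^i`-action on `Z_i`. -/
def orbitRel (n : ℕ → ℕ) (χ : (i : ℕ) → Fin (n i + 1) → ℕ)
    (c : (i : ℕ) → Fin (n i + 1) → ℕ → ℤ) (i : ℕ) :
    Zset n i → Zset n i → Prop :=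
  fun z z' => ∃ u : Fin i → Circle,
    torusAct n χ c u (z : (j : Fin i) → Fin (n j + 1) → ℂ)
      = (z' : (j : Fin i) → Fin (n j + 1) → ℂ)

/-- `X_i = Z_i / T^i`, with the quotient topology. -/
abbrev Xsp (n : ℕ → ℕ) (χ : (i : ℕ) → Fin (n i + 1) → ℕ)
    (c : (i : ℕ) → Fin (n i + 1) → ℕ → ℤ) (i : ℕ) : Type :=
  Quot (orbitRel n χ c i)

/-- The projection `Z_{i+1} → Z_i` forgetting the last sphere coordinate. -/
def projZ (n : ℕ → ℕ) (i : ℕ) (z : Zset n (i + 1)) : Zset n i :=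
  ⟨fun j α => (z : (j : Fin (i + 1)) → Fin (n j + 1) → ℂ) ⟨j.1, Nat.lt_succ_of_lt j.2⟩ α,
    fun j => z.2 ⟨j.1, Nat.lt_succ_of_lt j.2⟩⟩

/-- The unit sphere `S^{2d+1} ⊆ ℂ^{d+1}`. -/
def sphereSet (d : ℕ) : Set (Fin (d + 1) → ℂ) :=
  {w | ∑ α, Complex.normSq (w α) = 1}

/-- The orbit relation on `S^{2n_i+1}` of the weighted circle action
`u · z = (u^{χ^i_0} z_0, …, u^{χ^i_{n_i}} z_{n_i})`; its quotient is the weighted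
projective space `ℂP^{n_i}_{χ^i}` (here the block index is `m = i - 1`). -/
def wprojRel (n : ℕ → ℕ) (χ : (i : ℕ) → Fin (n i + 1) → ℕ) (m : ℕ) :
    sphereSet (n m) → sphereSet (n m) → Prop :=
  fun w w' => ∃ u : Circle, ∀ α, ((u ^ χ m α : Circle) : ℂ) * (w : Fin (n m + 1) → ℂ) α
    = (w' : Fin (n m + 1) → ℂ) α

open scoped Matrix

section TriangularChar

variable {G : Type*} [CommGroup G] {m : ℕ}

def triangularChar (e : Fin m → ℕ) (C : Fin m → Fin m → ℤ) (u : Fin m → G) (j : Fin m) : G :=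
  u j ^ e j * ∏ l : Fin m, if (l : ℕ) < j then u l ^ C j l else 1

def triangularMatrix (e : Fin m → ℕ) (C : Fin m → Fin m → ℤ) : Matrix (Fin m) (Fin m) ℤ :=
  Matrix.of fun j l => if l = j then (e j : ℤ) else if l < j then C j l else 0

lemma triangularChar_eq_prod_zpow (e : Fin m → ℕ) (C : Fin m → Fin m → ℤ) (u : Fin m → G)
    (j : Fin m) : triangularChar e C u j = ∏ l, u l ^ triangularMatrix e C j l := by
  have hsplit : ∀ l, u l ^ triangularMatrix e C j l
      = (if l = j then u l ^ e j else 1) * (if (l : ℕ) < j then u l ^ C j l else 1) := by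
    intro l
    rcases lt_trichotomy l j with h | rfl | h
    · simp [triangularMatrix, h, h.ne]
    · simp [triangularMatrix]
    · have : ¬ (l : ℕ) < j := by omega
      simp [triangularMatrix, h.ne', this, not_lt.2 h.le]
  simp_rw [hsplit, Finset.prod_mul_distrib, Finset.prod_ite_eq', Finset.mem_univ, if_true,
    triangularChar]

lemma det_triangularMatrix (e : Fin m → ℕ) (C : Fin m → Fin m → ℤ) :
    (triangularMatrix e C).det = ∏ j, (e j : ℤ) := by
  rw [Matrix.det_of_isLowerTriangular]
  · simp [triangularMatrix]
  · intro j l hjl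
    have : j < l := hjl
    simp [triangularMatrix, this.ne', not_lt.2 this.le]

lemma prod_zpow_vecMul {ι : Type*} [Fintype ι] (M : Matrix ι ι ℤ) (b : ι → ℤ) (u : ι → G) :
    ∏ l, u l ^ (b ᵥ* M) l = ∏ j, (∏ l, u l ^ M j l) ^ b j := by
  have zpow_sum : ∀ (g : G) (f : ι → ℤ) (s : Finset ι), g ^ (∑ j ∈ s, f j) = ∏ j ∈ s, g ^ f j :=
    fun g f s => Finset.cons_induction (by simp) (fun _ _ _ ih => by simp [_root_.zpow_add, ih]) s
  simp only [Matrix.vecMul, dotProduct, zpow_sum, ← Finset.prod_zpow, ← zpow_mul, mul_comm (b _)]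
  exact Finset.prod_comm

-- With `M = triangularMatrix e C` and `d = det M • d'`, take `b = d' ᵥ* adj M`,
-- since `adj M * M = det M • 1`.
theorem exists_prod_zpow_eq_prod_triangularChar_zpow (e : Fin m → ℕ) (C : Fin m → Fin m → ℤ)
    (d : Fin m → ℤ) (hd : ∀ l, (∏ j, (e j : ℤ)) ∣ d l) :
    ∃ b : Fin m → ℤ, ∀ u : Fin m → G, ∏ l, u l ^ d l = ∏ j, triangularChar e C u j ^ b j := by
  choose d' hd' using hd
  refine ⟨d' ᵥ* Matrix.adjugate (triangularMatrix e C), fun u => ?_⟩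
  have hb : d' ᵥ* Matrix.adjugate (triangularMatrix e C) ᵥ* triangularMatrix e C = d := by
    rw [Matrix.vecMul_vecMul, Matrix.adjugate_mul, det_triangularMatrix, Matrix.vecMul_smul,
      Matrix.vecMul_one]
    funext l
    simp [hd', mul_comm]
  simp_rw [triangularChar_eq_prod_zpow, ← prod_zpow_vecMul, hb]

lemma triangularChar_castSucc (e : Fin (m + 1) → ℕ) (C : Fin (m + 1) → Fin (m + 1) → ℤ)
    (u : Fin (m + 1) → G) (j : Fin m) :
    triangularChar e C u j.castSucc
      = triangularChar (Fin.init e) (fun j l => C j.castSucc l.castSucc) (Fin.init u) j := by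
  simp [triangularChar, Fin.prod_univ_castSucc, Fin.init, not_lt.2 j.is_lt.le]

lemma triangularChar_last (e : Fin (m + 1) → ℕ) (C : Fin (m + 1) → Fin (m + 1) → ℤ)
    (u : Fin (m + 1) → G) :
    triangularChar e C u (Fin.last m) =
      u (Fin.last m) ^ e (Fin.last m) * ∏ l : Fin m, Fin.init u l ^ C (Fin.last m) l.castSucc := by
  simp [triangularChar, Fin.prod_univ_castSucc, Fin.init]

lemma forall_triangularChar_eq_one_iff (e : Fin (m + 1) → ℕ) (C : Fin (m + 1) → Fin (m + 1) → ℤ)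
    (u : Fin (m + 1) → G) :
    (∀ j, triangularChar e C u j = 1) ↔
      (∀ j, triangularChar (Fin.init e) (fun j l => C j.castSucc l.castSucc) (Fin.init u) j = 1) ∧
        u (Fin.last m) ^ e (Fin.last m)
          = (∏ l : Fin m, Fin.init u l ^ C (Fin.last m) l.castSucc)⁻¹ := by
  simp [Fin.forall_fin_succ', triangularChar_castSucc, triangularChar_last, and_comm,
    mul_eq_one_iff_eq_inv]

end TriangularChar

lemma Circle.exists_pow_eq {e : ℕ} (he : e ≠ 0) (w : Circle) : ∃ v : Circle, v ^ e = w := by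
  obtain ⟨t, rfl⟩ := Circle.exp_surjective w
  refine ⟨Circle.exp (t / e), ?_⟩
  rw [← Circle.exp_natCast_mul, mul_div_cancel₀ _ (Nat.cast_ne_zero.2 he)]

lemma Circle.natCard_pow_eq_one {e : ℕ} (he : e ≠ 0) : Nat.card {v : Circle // v ^ e = 1} = e := by
  have : NeZero e := ⟨he⟩
  refine (Nat.card_congr <| _root_.toUnits.toEquiv.subtypeEquiv fun v => ?_).trans
    (HasEnoughRootsOfUnity.natCard_rootsOfUnity Circle e)
  simp [mem_rootsOfUnity, ← map_pow]

-- Restriction to the first `m` coordinates maps the kernel onto the kernel for `m`, and the last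
-- coordinate is then determined up to an `e (last m)`-th root of unity.
theorem natCard_triangularChar_eq_one : ∀ {m : ℕ} (e : Fin m → ℕ) (C : Fin m → Fin m → ℤ),
    (∀ j, e j ≠ 0) →
      Nat.card {u : Fin m → Circle // ∀ j, triangularChar e C u j = 1} = ∏ j, e j
  | 0, e, C, _ => by simp
  | m + 1, e, C, he => by
    choose root hroot using Circle.exists_pow_eq (he (Fin.last m))
    set g : (Fin m → Circle) → Circle :=
      fun u' => (∏ l : Fin m, u' l ^ C (Fin.last m) l.castSucc)⁻¹
    have splitLast : {u : Fin (m + 1) → Circle // ∀ j, triangularChar e C u j = 1} ≃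
        {u' : Fin m → Circle // ∀ j,
          triangularChar (Fin.init e) (fun j l => C j.castSucc l.castSucc) u' j = 1} ×
        {v : Circle // v ^ e (Fin.last m) = 1} :=
    { toFun u := (⟨Fin.init u.1, ((forall_triangularChar_eq_one_iff e C u.1).1 u.2).1⟩,
        ⟨u.1 (Fin.last m) / root (g (Fin.init u.1)), by
          rw [div_pow, hroot, ((forall_triangularChar_eq_one_iff e C u.1).1 u.2).2, div_self']⟩)
      invFun p := ⟨Fin.snoc p.1.1 (root (g p.1.1) * p.2.1), by
        rw [forall_triangularChar_eq_one_iff]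
        simp [Fin.init_snoc, mul_pow, hroot, p.1.2, p.2.2, g]⟩
      left_inv u := by
        ext1
        simp [mul_div_cancel]
      right_inv p := by
        ext <;> simp }
    rw [Nat.card_congr splitLast, Nat.card_prod,
      natCard_triangularChar_eq_one (Fin.init e) _ fun j => he _,
      Circle.natCard_pow_eq_one (he _), Fin.prod_univ_castSucc]
    rfl

section OrbitQuotient

variable {H G X : Type*} [Group H] [Group G] [MulAction G X] {r : X → X → Prop}

theorem quot_mk_eq_iff_of_smul (φ : H →* G) (hr : ∀ x y, r x y ↔ ∃ h, φ h • x = y) (x y : X) :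
    Quot.mk r x = Quot.mk r y ↔ r x y := by
  let := MulAction.compHom X φ
  obtain rfl : r = (MulAction.orbitRel H X).r := by
    ext x y
    rw [hr, (MulAction.orbitRel H X).comm']
    rfl
  exact Quotient.eq

theorem isOpenQuotientMap_quot_mk_of_smul [TopologicalSpace X] [ContinuousConstSMul G X]
    (φ : H →* G) (hr : ∀ x y, r x y ↔ ∃ h, φ h • x = y) : IsOpenQuotientMap (Quot.mk r) := by
  let := MulAction.compHom X φ
  have : ContinuousConstSMul H X := ⟨fun h => continuous_const_smul (φ h)⟩
  obtain rfl : r = (MulAction.orbitRel H X).r := by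
    ext x y
    rw [hr, (MulAction.orbitRel H X).comm']
    rfl
  exact MulAction.isOpenQuotientMap_quotientMk

end OrbitQuotient

section Actions

variable {n : ℕ → ℕ} {i d : ℕ}

instance : SMul ((j : Fin i) → Fin (n j + 1) → Circle) (Zset n i) where
  smul s z := ⟨fun j α => (s j α : ℂ) * z.1 j α, fun j => by simpa [Complex.normSq_mul] using z.2 j⟩

instance : MulAction ((j : Fin i) → Fin (n j + 1) → Circle) (Zset n i) where
  one_smul z := Subtype.ext <| by funext j α; exact one_mul _
  mul_smul s t z := Subtype.ext <| by funext j α; exact mul_assoc _ _ _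

@[simp]
lemma Zset.coe_smul_apply (s : (j : Fin i) → Fin (n j + 1) → Circle) (z : Zset n i) (j : Fin i)
    (α : Fin (n j + 1)) : (s • z).1 j α = s j α * z.1 j α := rfl

instance : ContinuousConstSMul ((j : Fin i) → Fin (n j + 1) → Circle) (Zset n i) where
  continuous_const_smul s := by
    refine Continuous.subtype_mk (continuous_pi fun j => continuous_pi fun α => ?_) _
    exact continuous_const.mul
      ((continuous_apply α).comp ((continuous_apply j).comp continuous_subtype_val))

instance : SMul (Fin (d + 1) → Circle) (sphereSet d) where
  smul s w := ⟨fun α => (s α : ℂ) * w.1 α, by simpa [sphereSet, Complex.normSq_mul] using w.2⟩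

instance : MulAction (Fin (d + 1) → Circle) (sphereSet d) where
  one_smul w := Subtype.ext <| by funext α; exact one_mul _
  mul_smul s t w := Subtype.ext <| by funext α; exact mul_assoc _ _ _

@[simp]
lemma sphereSet.coe_smul_apply (s : Fin (d + 1) → Circle) (w : sphereSet d) (α : Fin (d + 1)) :
    (s • w).1 α = s α * w.1 α := rfl

instance : ContinuousSMul (Fin (d + 1) → Circle) (sphereSet d) where
  continuous_smul := by
    refine Continuous.subtype_mk (continuous_pi fun α => ?_) _
    exact (continuous_subtype_val.comp ((continuous_apply α).comp continuous_fst)).mul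
      ((continuous_apply α).comp (continuous_subtype_val.comp continuous_snd))

variable (n) (χ : (i : ℕ) → Fin (n i + 1) → ℕ) (c : (i : ℕ) → Fin (n i + 1) → ℕ → ℤ)

def torusHom (i : ℕ) : (Fin i → Circle) →* ((j : Fin i) → Fin (n j + 1) → Circle) where
  toFun u j α := torusScalar n χ c u j α
  map_one' := by funext j α; simp [torusScalar]
  map_mul' u v := by
    funext j α
    simp only [torusScalar, Pi.mul_apply, mul_pow, mul_mul_mul_comm, ← Finset.prod_mul_distrib]
    congr 2
    funext l
    split_ifs <;> simp [mul_zpow]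

def weightHom (m : ℕ) : Circle →* (Fin (n m + 1) → Circle) :=
  MonoidHom.pi fun α => powMonoidHom (χ m α)

lemma orbitRel_iff (z z' : Zset n i) :
    orbitRel n χ c i z z' ↔ ∃ u, torusHom n χ c i u • z = z' := by
  simp only [orbitRel, Subtype.ext_iff]
  rfl

lemma wprojRel_iff (m : ℕ) (w w' : sphereSet (n m)) :
    wprojRel n χ m w w' ↔ ∃ v, weightHom n χ m v • w = w' := by
  simp only [wprojRel, Subtype.ext_iff, funext_iff]
  rfl

lemma quot_mk_orbitRel_eq_iff (i : ℕ) (z z' : Zset n i) :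
    Quot.mk (orbitRel n χ c i) z = Quot.mk _ z' ↔ ∃ u, torusHom n χ c i u • z = z' :=
  (quot_mk_eq_iff_of_smul _ (orbitRel_iff n χ c) z z').trans (orbitRel_iff n χ c z z')

lemma quot_mk_wprojRel_eq_iff (m : ℕ) (w w' : sphereSet (n m)) :
    Quot.mk (wprojRel n χ m) w = Quot.mk _ w' ↔ ∃ v, weightHom n χ m v • w = w' :=
  (quot_mk_eq_iff_of_smul _ (wprojRel_iff n χ m) w w').trans (wprojRel_iff n χ m w w')

lemma isOpenQuotientMap_quot_mk_orbitRel (i : ℕ) : IsOpenQuotientMap (Quot.mk (orbitRel n χ c i)) :=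
  isOpenQuotientMap_quot_mk_of_smul _ (orbitRel_iff n χ c)

lemma isOpenQuotientMap_quot_mk_wprojRel (m : ℕ) : IsOpenQuotientMap (Quot.mk (wprojRel n χ m)) :=
  isOpenQuotientMap_quot_mk_of_smul _ (wprojRel_iff n χ m)

end Actions

section Split

variable {n : ℕ → ℕ} {m : ℕ}

def lastSphere (ζ : Zset n (m + 1)) : sphereSet (n m) :=
  ⟨ζ.1 (Fin.last m), ζ.2 (Fin.last m)⟩

def snocZ (z : Zset n m) (w : sphereSet (n m)) : Zset n (m + 1) :=
  ⟨Fin.lastCases (motive := fun j => Fin (n j + 1) → ℂ) w.1 z.1,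
    Fin.lastCases (by simp only [Fin.lastCases_last]; exact w.2)
      fun j => by simp only [Fin.lastCases_castSucc]; exact z.2 j⟩

@[simp] lemma coe_projZ_apply (ζ : Zset n (m + 1)) (j : Fin m) :
    (projZ n m ζ).1 j = ζ.1 j.castSucc := rfl

@[simp] lemma projZ_snocZ (z : Zset n m) (w : sphereSet (n m)) : projZ n m (snocZ z w) = z :=
  Subtype.ext <| funext fun j => Fin.lastCases_castSucc (motive := fun j => Fin (n j + 1) → ℂ) j

@[simp] lemma lastSphere_snocZ (z : Zset n m) (w : sphereSet (n m)) : lastSphere (snocZ z w) = w :=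
  Subtype.ext <| Fin.lastCases_last (motive := fun j => Fin (n j + 1) → ℂ)

lemma Zset.ext_succ {ζ ζ' : Zset n (m + 1)} (h : projZ n m ζ = projZ n m ζ')
    (h' : lastSphere ζ = lastSphere ζ') : ζ = ζ' :=
  Subtype.ext <| funext <| Fin.lastCases (congrArg Subtype.val h')
    fun j => congrFun (congrArg Subtype.val h) j

@[simp] lemma snocZ_projZ_lastSphere (ζ : Zset n (m + 1)) :
    snocZ (projZ n m ζ) (lastSphere ζ) = ζ :=
  Zset.ext_succ (projZ_snocZ _ _) (lastSphere_snocZ _ _)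

lemma continuous_projZ : Continuous (projZ n m) :=
  (continuous_pi fun j => (continuous_apply j.castSucc).comp continuous_subtype_val).subtype_mk
    fun ζ => (projZ n m ζ).2

lemma continuous_lastSphere : Continuous (lastSphere (n := n) (m := m)) :=
  ((continuous_apply (Fin.last m)).comp continuous_subtype_val).subtype_mk
    fun ζ => (lastSphere ζ).2

lemma continuous_snocZ : Continuous fun p : Zset n m × sphereSet (n m) => snocZ p.1 p.2 := by
  refine Continuous.subtype_mk (continuous_pi <| Fin.lastCases ?_ fun j => ?_) _
  · simp only [Fin.lastCases_last]; fun_prop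
  · simp only [Fin.lastCases_castSucc]
    exact (continuous_apply j).comp (continuous_subtype_val.comp continuous_fst)

variable (n) (χ : (i : ℕ) → Fin (n i + 1) → ℕ) (c : (i : ℕ) → Fin (n i + 1) → ℕ → ℤ)

def couplingChar (u : Fin m → Circle) : Fin (n m + 1) → Circle :=
  fun α => ∏ l, u l ^ c m α l

lemma projZ_torusHom_smul (u : Fin (m + 1) → Circle) (ζ : Zset n (m + 1)) :
    projZ n m (torusHom n χ c (m + 1) u • ζ) = torusHom n χ c m (Fin.init u) • projZ n m ζ := by
  ext j α
  simp [torusHom, torusScalar, Fin.prod_univ_castSucc, Fin.init,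
    not_lt.2 (Fin.castSucc_lt_last j).le]

lemma lastSphere_torusHom_smul (u : Fin (m + 1) → Circle) (ζ : Zset n (m + 1)) :
    lastSphere (torusHom n χ c (m + 1) u • ζ)
      = (weightHom n χ m (u (Fin.last m)) * couplingChar n c (Fin.init u)) • lastSphere ζ := by
  ext α
  simp [lastSphere, torusHom, torusScalar, weightHom, couplingChar, Fin.prod_univ_castSucc,
    Fin.init]

lemma quot_mk_orbitRel_succ_eq_iff (ζ ζ' : Zset n (m + 1)) :
    Quot.mk (orbitRel n χ c (m + 1)) ζ = Quot.mk _ ζ' ↔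
      ∃ u v, torusHom n χ c m u • projZ n m ζ = projZ n m ζ' ∧
        (weightHom n χ m v * couplingChar n c u) • lastSphere ζ = lastSphere ζ' := by
  rw [quot_mk_orbitRel_eq_iff]
  constructor
  · rintro ⟨u, rfl⟩
    exact ⟨Fin.init u, u (Fin.last m), (projZ_torusHom_smul n χ c u ζ).symm,
      (lastSphere_torusHom_smul n χ c u ζ).symm⟩
  · rintro ⟨u, v, hproj, hlast⟩
    refine ⟨Fin.snoc u v, Zset.ext_succ ?_ ?_⟩
    · rw [projZ_torusHom_smul, Fin.init_snoc, hproj]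
    · rw [lastSphere_torusHom_smul, Fin.init_snoc, Fin.snoc_last, hlast]

end Split

namespace Circle

def normalize (x : ℂ) : Circle :=
  if hx : x = 0 then 1
  else ⟨NormedSpace.normalize x,
    mem_sphere_zero_iff_norm.2 (NormedSpace.norm_normalize_eq_one_iff.2 hx)⟩

lemma coe_normalize {x : ℂ} (hx : x ≠ 0) : (normalize x : ℂ) = NormedSpace.normalize x := by
  simp [normalize, hx]

lemma normalize_mul {x : ℂ} (s : Circle) (hx : x ≠ 0) : normalize (s * x) = s * normalize x := by
  ext
  rw [coe_mul, coe_normalize hx, coe_normalize (mul_ne_zero s.coe_ne_zero hx)]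
  simp [NormedSpace.normalize, norm_coe]
  ring

lemma continuousOn_normalize : ContinuousOn normalize {0}ᶜ := by
  refine (Topology.IsInducing.subtypeVal (t := (Submonoid.unitSphere ℂ : Set ℂ))).continuousOn_iff.2
    ?_
  refine ContinuousOn.congr (f := NormedSpace.normalize) ?_ fun x hx => coe_normalize hx
  exact (continuous_norm.continuousOn.inv₀ fun x hx => norm_ne_zero_iff.2 hx).smul continuousOn_id

end Circle

section Gauge

variable {n : ℕ → ℕ} {m : ℕ} (a : (j : Fin m) → Fin (n j + 1))

def nonvanishingSet : Set (Zset n m) := {z | ∀ j, z.1 j (a j) ≠ 0}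

lemma isOpen_nonvanishingSet : IsOpen (nonvanishingSet a) := by
  simp only [nonvanishingSet, Set.ofPred_forall]
  exact isOpen_iInter_of_finite fun j => isOpen_ne_fun
    ((continuous_apply _).comp ((continuous_apply j).comp continuous_subtype_val)) continuous_const

lemma smul_mem_nonvanishingSet (s : (j : Fin m) → Fin (n j + 1) → Circle) {z : Zset n m}
    (hz : z ∈ nonvanishingSet a) : s • z ∈ nonvanishingSet a :=
  fun j => by simpa using hz j

variable (b : Fin (n m + 1) → Fin m → ℤ)

def phaseGauge (z : Zset n m) : Fin (n m + 1) → Circle :=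
  fun α => ∏ j, Circle.normalize (z.1 j (a j)) ^ b α j

lemma continuousOn_phaseGauge : ContinuousOn (phaseGauge a b) (nonvanishingSet a) := by
  refine continuousOn_pi.2 fun α => continuousOn_finsetProd _ fun j _ => ?_
  refine ContinuousOn.zpow ?_ _
  exact Circle.continuousOn_normalize.comp
    ((continuous_apply _).comp ((continuous_apply j).comp continuous_subtype_val)).continuousOn
    fun z hz => hz j

lemma phaseGauge_torusHom_smul (χ : (i : ℕ) → Fin (n i + 1) → ℕ)
    (c : (i : ℕ) → Fin (n i + 1) → ℕ → ℤ)
    (hb : ∀ α u, couplingChar n c u α = ∏ j, torusHom n χ c m u j (a j) ^ b α j)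
    (u : Fin m → Circle) {z : Zset n m} (hz : z ∈ nonvanishingSet a) :
    phaseGauge a b (torusHom n χ c m u • z) = couplingChar n c u * phaseGauge a b z := by
  funext α
  simp only [phaseGauge, Zset.coe_smul_apply, Circle.normalize_mul _ (hz _), mul_zpow,
    Finset.prod_mul_distrib, Pi.mul_apply, hb]

end Gauge

open Function in
theorem Topology.IsQuotientMap.exists_homeomorph_comp_eq {X Y Z : Type*} [TopologicalSpace X]
    [TopologicalSpace Y] [TopologicalSpace Z] {f : X → Y} {g : X → Z} (hf : IsQuotientMap f)
    (hg : IsQuotientMap g) (h : ∀ x x', f x = f x' ↔ g x = g x') :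
    ∃ φ : Y ≃ₜ Z, φ ∘ f = g := by
  let φ := g ∘ surjInv hf.surjective
  let ψ := f ∘ surjInv hg.surjective
  have hφ : φ ∘ f = g := funext fun x => (h _ _).1 (surjInv_eq hf.surjective (f x))
  have hψ : ψ ∘ g = f := funext fun x => (h _ _).2 (surjInv_eq hg.surjective (g x))
  refine ⟨⟨⟨φ, ψ, fun y => ?_, fun z => ?_⟩, hf.continuous_iff.2 (hφ ▸ hg.continuous),
    hg.continuous_iff.2 (hψ ▸ hf.continuous)⟩, hφ⟩
  · obtain ⟨x, rfl⟩ := hf.surjective y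
    exact (congrArg ψ (congrFun hφ x)).trans (congrFun hψ x)
  · obtain ⟨x, rfl⟩ := hg.surjective z
    exact (congrArg φ (congrFun hψ x)).trans (congrFun hφ x)

section Trivialization

variable {n : ℕ → ℕ} {m : ℕ} (a : (j : Fin m) → Fin (n j + 1)) (b : Fin (n m + 1) → Fin m → ℤ)

def gaugeChart (V : Set (Zset n m)) (hV : V ⊆ nonvanishingSet a) :
    ↥(projZ n m ⁻¹' V) ≃ₜ ↥V × sphereSet (n m) where
  toFun ζ := (⟨projZ n m ζ, ζ.2⟩, (phaseGauge a b (projZ n m ζ))⁻¹ • lastSphere ζ.1)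
  invFun p := ⟨snocZ p.1 (phaseGauge a b p.1 • p.2), by simp⟩
  left_inv ζ := Subtype.ext <| by simp
  right_inv p := by simp
  continuous_toFun := by
    have hgauge := (continuousOn_phaseGauge a b).comp_continuous
      (continuous_projZ.comp continuous_subtype_val) fun ζ : ↥(projZ n m ⁻¹' V) => hV ζ.2
    exact ((continuous_projZ.comp continuous_subtype_val).subtype_mk _).prodMk
      (hgauge.inv.smul (continuous_lastSphere.comp continuous_subtype_val))
  continuous_invFun := by
    have hgauge := (continuousOn_phaseGauge a b).comp_continuous
      (continuous_subtype_val.comp continuous_fst) fun p : ↥V × sphereSet (n m) => hV p.1.2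
    exact (continuous_snocZ.comp ((continuous_subtype_val.comp continuous_fst).prodMk
      (hgauge.smul continuous_snd))).subtype_mk _

variable (χ : (i : ℕ) → Fin (n i + 1) → ℕ) (c : (i : ℕ) → Fin (n i + 1) → ℕ → ℤ)

lemma quot_mk_orbitRel_succ_eq_iff_gaugeChart
    (hb : ∀ α u, couplingChar n c u α = ∏ j, torusHom n χ c m u j (a j) ^ b α j)
    (V : Set (Zset n m)) (hV : V ⊆ nonvanishingSet a) (ζ ζ' : ↥(projZ n m ⁻¹' V)) :
    Quot.mk (orbitRel n χ c (m + 1)) ζ.1 = Quot.mk _ ζ'.1 ↔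
      Quot.mk (orbitRel n χ c m) (gaugeChart a b V hV ζ).1.1
          = Quot.mk _ (gaugeChart a b V hV ζ').1.1 ∧
        Quot.mk (wprojRel n χ m) (gaugeChart a b V hV ζ).2
          = Quot.mk _ (gaugeChart a b V hV ζ').2 := by
  simp only [quot_mk_orbitRel_succ_eq_iff, quot_mk_orbitRel_eq_iff, quot_mk_wprojRel_eq_iff,
    gaugeChart, Homeomorph.homeomorph_mk_coe, Equiv.coe_fn_mk]
  have key : ∀ u, torusHom n χ c m u • projZ n m ζ = projZ n m ζ' → ∀ v,
      (weightHom n χ m v * couplingChar n c u) • lastSphere ζ.1 = lastSphere ζ'.1 ↔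
        weightHom n χ m v • (phaseGauge a b (projZ n m ζ))⁻¹ • lastSphere ζ.1
          = (phaseGauge a b (projZ n m ζ'))⁻¹ • lastSphere ζ'.1 := by
    intro u hu v
    rw [← hu, phaseGauge_torusHom_smul a b χ c hb u (hV ζ.2), eq_comm (b := _⁻¹ • _),
      inv_smul_eq_iff, smul_smul, smul_smul, mul_right_comm _ (weightHom n χ m v),
      mul_inv_cancel_right, mul_comm (couplingChar n c u), eq_comm]
  constructor
  · rintro ⟨u, v, hu, hv⟩
    exact ⟨⟨u, hu⟩, v, (key u hu v).1 hv⟩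
  · rintro ⟨⟨u, hu⟩, v, hv⟩
    exact ⟨u, v, hu, (key u hu v).2 hv⟩

theorem exists_trivialization
    (hb : ∀ α u, couplingChar n c u α = ∏ j, torusHom n χ c m u j (a j) ^ b α j)
    (π : Xsp n χ c (m + 1) → Xsp n χ c m)
    (hπ : ∀ z : Zset n (m + 1),
      π (Quot.mk (orbitRel n χ c (m + 1)) z) = Quot.mk (orbitRel n χ c m) (projZ n m z)) :
    ∃ U : Set (Xsp n χ c m), IsOpen U ∧
      (∀ z ∈ nonvanishingSet a, Quot.mk (orbitRel n χ c m) z ∈ U) ∧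
      ∃ φ : (π ⁻¹' U) ≃ₜ U × Quot (wprojRel n χ m),
        ∀ q : π ⁻¹' U, ((φ q).1 : Xsp n χ c m) = π (q : Xsp n χ c (m + 1)) := by
  set qm := Quot.mk (orbitRel n χ c m)
  set qZ := Quot.mk (orbitRel n χ c (m + 1))
  set U := qm '' nonvanishingSet a
  have hsat : qm ⁻¹' U ⊆ nonvanishingSet a := by
    rintro z ⟨z', hz', hzz'⟩
    obtain ⟨u, rfl⟩ := (quot_mk_orbitRel_eq_iff n χ c m z' z).1 hzz'
    exact smul_mem_nonvanishingSet a _ hz'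
  have hW : qZ ⁻¹' (π ⁻¹' U) = projZ n m ⁻¹' (qm ⁻¹' U) := by
    ext ζ
    simp only [Set.mem_preimage, qZ, hπ]
  let chart := (Homeomorph.setCongr hW).trans (gaugeChart a b _ hsat)
  have hf := (isOpenQuotientMap_quot_mk_orbitRel n χ c (m + 1)).restrictPreimage (π ⁻¹' U)
  have hF := ((isOpenQuotientMap_quot_mk_orbitRel n χ c m).restrictPreimage U).prodMap
    (isOpenQuotientMap_quot_mk_wprojRel n χ m)
  obtain ⟨φ, hφ⟩ := hf.isQuotientMap.exists_homeomorph_comp_eq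
    (hF.isQuotientMap.comp chart.isQuotientMap) fun ζ ζ' => by
      simp only [Function.comp_apply, Prod.map, Prod.ext_iff, Subtype.ext_iff,
        Set.restrictPreimage_coe]
      exact quot_mk_orbitRel_succ_eq_iff_gaugeChart a b χ c hb _ hsat (Homeomorph.setCongr hW ζ)
        (Homeomorph.setCongr hW ζ')
  refine ⟨U,
    (isOpenQuotientMap_quot_mk_orbitRel n χ c m).isOpenMap _ (isOpen_nonvanishingSet a),
    fun z hz => ⟨z, hz, rfl⟩, φ, fun q => ?_⟩
  obtain ⟨ζ, rfl⟩ := hf.surjective q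
  rw [← Function.comp_apply (f := φ), hφ]
  exact (hπ ζ).symm

end Trivialization

section BasisPoint

variable {n : ℕ → ℕ} {m : ℕ}

lemma Zset.exists_ne_zero (z : Zset n m) (j : Fin m) : ∃ α, z.1 j α ≠ 0 := by
  by_contra! h
  simpa [h] using z.2 j

def basisPoint (a : (j : Fin m) → Fin (n j + 1)) : Zset n m :=
  ⟨fun j α => if α = a j then 1 else 0, fun j => by simp [apply_ite Complex.normSq]⟩

lemma torusAct_basisPoint_eq_iff (χ : (i : ℕ) → Fin (n i + 1) → ℕ)
    (c : (i : ℕ) → Fin (n i + 1) → ℕ → ℤ) (a : (j : Fin m) → Fin (n j + 1)) (u : Fin m → Circle) :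
    torusAct n χ c u (basisPoint a).1 = (basisPoint a).1 ↔
      ∀ j, triangularChar (fun j => χ j (a j)) (fun j l => c j (a j) l) u j = 1 := by
  simp only [funext_iff, torusAct, basisPoint]
  refine forall_congr' fun j => ⟨fun h => ?_, fun h α => ?_⟩
  · have hj := h (a j)
    rw [if_pos rfl, mul_one, Circle.coe_eq_one] at hj
    exact hj
  · split_ifs with hα
    · rw [show torusScalar n χ c u j α = 1 from hα ▸ h, Circle.coe_one, one_mul]
    · rw [mul_zero]

lemma natCard_stabilizer_basisPoint (χ : (i : ℕ) → Fin (n i + 1) → ℕ)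
    (c : (i : ℕ) → Fin (n i + 1) → ℕ → ℤ) (a : (j : Fin m) → Fin (n j + 1))
    (hχ : ∀ j : Fin m, χ j (a j) ≠ 0) :
    Nat.card {u : Fin m → Circle // torusAct n χ c u (basisPoint a).1 = (basisPoint a).1}
      = ∏ j : Fin m, χ j (a j) := by
  rw [Nat.card_congr (Equiv.subtypeEquivRight (torusAct_basisPoint_eq_iff χ c a))]
  exact natCard_triangularChar_eq_one _ _ hχ

end BasisPoint

theorem projection_is_fiber_bundle_general
    (k m : ℕ) (hmk : m + 1 ≤ k)
    (n : ℕ → ℕ)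
    (χ : (i : ℕ) → Fin (n i + 1) → ℕ) (hχpos : ∀ i, i < k → ∀ α, 0 < χ i α)
    (c : (i : ℕ) → Fin (n i + 1) → ℕ → ℤ)
    (hdvd : ∀ x : Zset n m, ∀ α : Fin (n m + 1), ∀ l, l < m →
      (Nat.card {u : Fin m → Circle //
          torusAct n χ c u (x : (j : Fin m) → Fin (n j + 1) → ℂ)
            = (x : (j : Fin m) → Fin (n j + 1) → ℂ)} : ℤ) ∣ c m α l)
    (π : Xsp n χ c (m + 1) → Xsp n χ c m)
    (hπ : ∀ z : Zset n (m + 1),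
      π (Quot.mk (orbitRel n χ c (m + 1)) z) = Quot.mk (orbitRel n χ c m) (projZ n m z)) :
    ∀ p : Xsp n χ c m, ∃ U : Set (Xsp n χ c m), IsOpen U ∧ p ∈ U ∧
      ∃ φ : (π ⁻¹' U) ≃ₜ U × Quot (wprojRel n χ m),
        ∀ q : π ⁻¹' U, ((φ q).1 : Xsp n χ c m) = π (q : Xsp n χ c (m + 1)) := by
  intro p
  obtain ⟨z, rfl⟩ := Quot.exists_rep p
  choose a ha using Zset.exists_ne_zero z
  have hcard := natCard_stabilizer_basisPoint χ c a fun j => (hχpos j (by omega) (a j)).ne'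
  choose b hb using fun α => exists_prod_zpow_eq_prod_triangularChar_zpow (G := Circle)
    (fun j => χ j (a j)) (fun j l => c j (a j) l) (fun l => c m α l) fun l => by
      simpa [hcard] using hdvd (basisPoint a) α l l.2
  obtain ⟨U, hU, hzU, φ, hφ⟩ := exists_trivialization a b χ c hb π hπ
  exact ⟨U, hU, hzU z ha, φ, hφ⟩

/-- If the order of the stabilizer of every point of `Z_{i-1}` divides every
`c^i_{α,l}`, then `π_i : X_i → X_{i-1}` is a locally trivial fiber bundle with fiber
the weighted projective space `ℂP^{n_i}_{χ^i}`: every point of `X_{i-1}` has an open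
neighbourhood `U` and a homeomorphism `π_i⁻¹(U) ≅ U × ℂP^{n_i}_{χ^i}` commuting with
the projections to `U` (here `i = m + 1`, `1 ≤ m`). -/
theorem projection_is_fiber_bundle
    (k m : ℕ) (hm : 1 ≤ m) (hmk : m + 1 ≤ k)
    (n : ℕ → ℕ) (hn : ∀ i, i < k → 1 ≤ n i)
    (χ : (i : ℕ) → Fin (n i + 1) → ℕ) (hχpos : ∀ i, i < k → ∀ α, 0 < χ i α)
    (c : (i : ℕ) → Fin (n i + 1) → ℕ → ℤ)
    (hdvd : ∀ x : Zset n m, ∀ α : Fin (n m + 1), ∀ l, l < m →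
      (Nat.card {u : Fin m → Circle //
          torusAct n χ c u (x : (j : Fin m) → Fin (n j + 1) → ℂ)
            = (x : (j : Fin m) → Fin (n j + 1) → ℂ)} : ℤ) ∣ c m α l)
    (π : Xsp n χ c (m + 1) → Xsp n χ c m)
    (hπ : ∀ z : Zset n (m + 1),
      π (Quot.mk (orbitRel n χ c (m + 1)) z) = Quot.mk (orbitRel n χ c m) (projZ n m z)) :
    ∀ p : Xsp n χ c m, ∃ U : Set (Xsp n χ c m), IsOpen U ∧ p ∈ U ∧
      ∃ φ : (π ⁻¹' U) ≃ₜ U × Quot (wprojRel n χ m),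
        ∀ q : π ⁻¹' U, ((φ q).1 : Xsp n χ c m) = π (q : Xsp n χ c (m + 1)) :=
  projection_is_fiber_bundle_general k m hmk n χ hχpos c hdvd π hπ
end
end
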